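/- arXiv:2011.04291 — 3 statements merged into one kernel-verified Lean document; each statement's English description precedes it below -/
import Mathlib

section
/- There exists a unique formal power series C(x) over ℚ with C(0) = 0 and [x¹]C = 1 satisfying the Riccati-type differential equation 2x·C(x)·C'(x) = C(x)·(1 + C(x)) − x. -/
/-!
Since `2 C C' = (C²)'` and `x F'` has `n`-th coefficient `n [xⁿ]F`, comparing the coefficients of
`xⁿ⁺¹` turns the equation into `[xⁿ⁺¹]C = δₙ₀ + n [xⁿ⁺¹]C²`. When `C(0) = 0`, the coefficient
`[xⁿ⁺¹]C²` only involves `[x¹]C, …, [xⁿ]C`, so this is a recursion determining `C` uniquely. It has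
no division, so the solution exists over any commutative ring and has integer coefficients.
-/

open PowerSeries Finset

section Riccati

variable {R : Type*} [CommRing R]

theorem coeff_two_mul_X_mul_mul_derivative (f : R⟦X⟧) (n : ℕ) :
    coeff n (2 * X * f * d⁄dX R f) = (n : R) * coeff n (f ^ 2) := by
  have hsq : 2 * X * f * d⁄dX R f = X * d⁄dX R (f ^ 2) := by
    rw [sq, Derivation.leibniz, smul_eq_mul]
    ring
  rw [hsq]
  cases n with
  | zero => simp
  | succ n =>
    rw [coeff_succ_X_mul, coeff_derivative]
    push_cast
    ring

theorem coeff_succ_sq_of_constantCoeff_eq_zero {f : R⟦X⟧} (hf : constantCoeff f = 0) (n : ℕ) :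
    coeff (n + 1) (f ^ 2) = ∑ k ∈ range n, coeff (k + 1) f * coeff (n - k) f := by
  rw [sq, coeff_mul, Nat.sum_antidiagonal_succ, Nat.sum_antidiagonal_eq_sum_range_succ_mk,
    sum_range_succ, Nat.sub_self, coeff_zero_eq_constantCoeff, hf]
  simp

theorem riccati_iff_coeff_succ {f : R⟦X⟧} (hf : constantCoeff f = 0) :
    2 * X * f * d⁄dX R f = f * (1 + f) - X ↔
      ∀ n : ℕ, coeff (n + 1) f =
        (if n = 0 then 1 else 0) + n * ∑ k ∈ range n, coeff (k + 1) f * coeff (n - k) f := by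
  have hcoeff (n : ℕ) :
      coeff (n + 1) (2 * X * f * d⁄dX R f) = coeff (n + 1) (f * (1 + f) - X) ↔
        coeff (n + 1) f =
          (if n = 0 then 1 else 0) + n * ∑ k ∈ range n, coeff (k + 1) f * coeff (n - k) f := by
    rw [coeff_two_mul_X_mul_mul_derivative, map_sub, mul_add, mul_one, ← sq, map_add, coeff_X,
      coeff_succ_sq_of_constantCoeff_eq_zero hf]
    simp only [Nat.add_eq_right]
    push_cast
    constructor <;> intro h <;> linear_combination -h
  rw [PowerSeries.ext_iff]
  refine ⟨fun h n => (hcoeff n).mp (h (n + 1)), fun h n => ?_⟩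
  cases n with
  | zero => simp [hf]
  | succ n => exact (hcoeff n).mpr (h n)

end Riccati

-- Summing over `Fin n` makes the recursion visibly well founded; see `connectedChordCount_succ`.
def connectedChordCount : ℕ → ℕ
  | 0 => 0
  | n + 1 => (if n = 0 then 1 else 0) +
      n * ∑ k : Fin n, connectedChordCount (k + 1) * connectedChordCount (n - k)
decreasing_by all_goals omega

theorem connectedChordCount_succ (n : ℕ) :
    connectedChordCount (n + 1) = (if n = 0 then 1 else 0) +
      n * ∑ k ∈ range n, connectedChordCount (k + 1) * connectedChordCount (n - k) := by
  rw [connectedChordCount,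
    Fin.sum_univ_eq_sum_range (fun k => connectedChordCount (k + 1) * connectedChordCount (n - k))]

def connectedChordSeries (R : Type*) [CommRing R] : R⟦X⟧ :=
  mk fun n => (connectedChordCount n : R)

section connectedChordSeries

variable {R : Type*} [CommRing R]

@[simp]
theorem coeff_connectedChordSeries (n : ℕ) :
    coeff n (connectedChordSeries R) = connectedChordCount n :=
  coeff_mk _ _

@[simp]
theorem constantCoeff_connectedChordSeries : constantCoeff (connectedChordSeries R) = 0 := by
  rw [← coeff_zero_eq_constantCoeff_apply, coeff_connectedChordSeries, connectedChordCount,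
    Nat.cast_zero]

theorem coeff_one_connectedChordSeries : coeff 1 (connectedChordSeries R) = 1 := by
  rw [coeff_connectedChordSeries, connectedChordCount_succ]
  simp

theorem connectedChordSeries_riccati :
    2 * X * connectedChordSeries R * d⁄dX R (connectedChordSeries R) =
      connectedChordSeries R * (1 + connectedChordSeries R) - X := by
  rw [riccati_iff_coeff_succ constantCoeff_connectedChordSeries]
  intro n
  rw [coeff_connectedChordSeries, connectedChordCount_succ]
  push_cast
  simp only [coeff_connectedChordSeries]

theorem eq_connectedChordSeries_of_riccati {f : R⟦X⟧} (hf : constantCoeff f = 0)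
    (h : 2 * X * f * d⁄dX R f = f * (1 + f) - X) : f = connectedChordSeries R := by
  ext n
  induction n using Nat.strong_induction_on with
  | _ n ih =>
    cases n with
    | zero =>
      simp only [coeff_zero_eq_constantCoeff_apply, hf, constantCoeff_connectedChordSeries]
    | succ n =>
      rw [(riccati_iff_coeff_succ hf).mp h n,
        (riccati_iff_coeff_succ constantCoeff_connectedChordSeries).mp connectedChordSeries_riccati n]
      refine congrArg _ (congrArg _ (sum_congr rfl fun k hk => ?_))
      have hk : k < n := mem_range.mp hk
      rw [ih (k + 1) (by omega), ih (n - k) (by omega)]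

end connectedChordSeries

/-- There is a unique formal power series `C ∈ ℚ⟦x⟧` with `C(0) = 0`,
`[x¹]C = 1`, satisfying `2x C C' = C (1 + C) - x`. -/
theorem stmt_2 :
    ∃! C : PowerSeries ℚ,
      constantCoeff C = 0 ∧ coeff 1 C = 1 ∧
        2 * X * C * (d⁄dX ℚ C) = C * (1 + C) - X :=
  ⟨connectedChordSeries ℚ,
    ⟨constantCoeff_connectedChordSeries, coeff_one_connectedChordSeries,
      connectedChordSeries_riccati⟩,
    fun _ ⟨hf, _, h⟩ => eq_connectedChordSeries_of_riccati hf h⟩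
end

section
/- Let C be the connected chord diagram generating function and define the vertex Green function series U₁₁(x) by U₁₁(x)·C(x)³ = x²·(C(x) − x). Then U₁₁ is a well-defined formal power series with [x¹]U₁₁ = 1, [x²]U₁₁ = 1, [x³]U₁₁ = 9, [x⁴]U₁₁ = 100, [x⁵]U₁₁ = 1323. -/
/-!
Since `2xCC' = x(C²)'`, the equation for `C` reads `cₙ = (n - 1)[xⁿ]C²` for `n ≠ 1`, which
determines `c₂, …, c₆ = 1, 4, 27, 248, 2830`. Writing `C = xV` with `V(0) = 1`, the defining
equation of `U` becomes `U V³ = V - 1`: it has the unique solution `(V - 1)/V³`, and comparing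
coefficients of degree `0, …, 5` yields those of `U` one at a time.
-/

open PowerSeries

namespace PowerSeries

variable {R : Type*} [CommRing R]

theorem coeff_X_mul_derivative (f : R⟦X⟧) (n : ℕ) :
    coeff n (X * d⁄dX R f) = n * coeff n f := by
  cases n with
  | zero => simp
  | succ n => rw [coeff_succ_X_mul, coeff_derivative]; push_cast; ring

theorem coeff_eq_sub_one_mul_coeff_sq {C : R⟦X⟧}
    (hode : 2 * X * C * d⁄dX R C = C * (1 + C) - X) {n : ℕ} (hn : n ≠ 1) :
    coeff n C = (n - 1) * coeff n (C ^ 2) := by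
  have hsq : 2 * X * C * d⁄dX R C = X * d⁄dX R (C ^ 2) := by
    rw [Derivation.leibniz_pow]; simp only [nsmul_eq_mul, smul_eq_mul]; ring
  have h := congrArg (coeff n) (hsq ▸ hode)
  rw [coeff_X_mul_derivative, map_sub, coeff_X, if_neg hn, mul_add, mul_one, ← sq,
    map_add] at h
  linear_combination -h

theorem mul_X_mul_pow_three_eq_iff {U V : R⟦X⟧} :
    U * (X * V) ^ 3 = X ^ 2 * (X * V - X) ↔ U * V ^ 3 = V - 1 := by
  rw [show U * (X * V) ^ 3 = X ^ 3 * (U * V ^ 3) by ring,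
    show X ^ 2 * (X * V - X) = X ^ 3 * (V - 1) by ring, X_pow_mul_inj]

theorem coeff_two_to_six_of_ode {C : R⟦X⟧} (h0 : constantCoeff C = 0)
    (h1 : coeff 1 C = 1) (hode : 2 * X * C * d⁄dX R C = C * (1 + C) - X) :
    coeff 2 C = 1 ∧ coeff 3 C = 4 ∧ coeff 4 C = 27 ∧ coeff 5 C = 248 ∧
      coeff 6 C = 2830 := by
  have h0 : coeff 0 C = 0 := by simpa using h0
  have hrec (n : ℕ) (hn : n ≠ 1) :
      coeff n C = (n - 1) * ∑ i ∈ Finset.range (n + 1), coeff i C * coeff (n - i) C := by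
    rw [coeff_eq_sub_one_mul_coeff_sq hode hn, sq, coeff_mul,
      Finset.Nat.sum_antidiagonal_eq_sum_range_succ (fun i j => coeff i C * coeff j C)]
  have c2 : coeff 2 C = 1 := by
    rw [hrec 2 (by norm_num)]; simp [Finset.sum_range_succ, h0, h1]; norm_num
  have c3 : coeff 3 C = 4 := by
    rw [hrec 3 (by norm_num)]; simp [Finset.sum_range_succ, h0, h1, c2]; norm_num
  have c4 : coeff 4 C = 27 := by
    rw [hrec 4 (by norm_num)]; simp [Finset.sum_range_succ, h0, h1, c2, c3]; norm_num
  have c5 : coeff 5 C = 248 := by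
    rw [hrec 5 (by norm_num)]; simp [Finset.sum_range_succ, h0, h1, c2, c3, c4]; norm_num
  have c6 : coeff 6 C = 2830 := by
    rw [hrec 6 (by norm_num)]; simp [Finset.sum_range_succ, h0, h1, c2, c3, c4, c5]; norm_num
  exact ⟨c2, c3, c4, c5, c6⟩

theorem coeff_of_mul_pow_three_eq_sub_one {U V : R⟦X⟧} (v0 : coeff 0 V = 1)
    (v1 : coeff 1 V = 1) (v2 : coeff 2 V = 4) (v3 : coeff 3 V = 27) (v4 : coeff 4 V = 248)
    (v5 : coeff 5 V = 2830) (hU : U * V ^ 3 = V - 1) :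
    coeff 1 U = 1 ∧ coeff 2 U = 1 ∧ coeff 3 U = 9 ∧ coeff 4 U = 100 ∧ coeff 5 U = 1323 := by
  obtain ⟨w0, w1, w2, w3, w4, w5⟩ : coeff 0 (V ^ 3) = 1 ∧ coeff 1 (V ^ 3) = 3 ∧
      coeff 2 (V ^ 3) = 15 ∧ coeff 3 (V ^ 3) = 106 ∧ coeff 4 (V ^ 3) = 966 ∧
      coeff 5 (V ^ 3) = 10755 := by
    refine ⟨?_, ?_, ?_, ?_, ?_, ?_⟩ <;>
      simp [pow_succ, coeff_mul, Finset.Nat.sum_antidiagonal_eq_sum_range_succ_mk,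
        Finset.sum_range_succ, v0, v1, v2, v3, v4, v5] <;> norm_num
  have hcoeff (n : ℕ) : ∑ i ∈ Finset.range (n + 1), coeff i U * coeff (n - i) (V ^ 3) =
      coeff n V - if n = 0 then 1 else 0 := by
    rw [← Finset.Nat.sum_antidiagonal_eq_sum_range_succ (fun i j => coeff i U * coeff j (V ^ 3)),
      ← coeff_mul, hU, map_sub, coeff_one]
  have u0 : coeff 0 U = 0 := by
    simpa [w0, v0] using hcoeff 0
  have u1 : coeff 1 U = 1 := by
    have := hcoeff 1; simp [Finset.sum_range_succ, u0, w0, v1] at this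
    linear_combination this
  have u2 : coeff 2 U = 1 := by
    have := hcoeff 2; simp [Finset.sum_range_succ, u0, u1, w0, w1, v2] at this
    linear_combination this
  have u3 : coeff 3 U = 9 := by
    have := hcoeff 3; simp [Finset.sum_range_succ, u0, u1, u2, w0, w1, w2, v3] at this
    linear_combination this
  have u4 : coeff 4 U = 100 := by
    have := hcoeff 4; simp [Finset.sum_range_succ, u0, u1, u2, u3, w0, w1, w2, w3, v4] at this
    linear_combination this
  have u5 : coeff 5 U = 1323 := by
    have := hcoeff 5
    simp [Finset.sum_range_succ, u0, u1, u2, u3, u4, w0, w1, w2, w3, w4, v5] at this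
    linear_combination this
  exact ⟨u1, u2, u3, u4, u5⟩

theorem existsUnique_mul_pow_three_eq {C : R⟦X⟧} (h0 : constantCoeff C = 0)
    (h1 : IsUnit (coeff 1 C)) : ∃! U : R⟦X⟧, U * C ^ 3 = X ^ 2 * (C - X) := by
  obtain ⟨V, rfl⟩ : X ∣ C := X_dvd_iff.mpr h0
  simp only [mul_X_mul_pow_three_eq_iff]
  have hV : IsUnit V := by
    rwa [isUnit_iff_constantCoeff, ← coeff_zero_eq_constantCoeff_apply, ← coeff_succ_X_mul]
  obtain ⟨u, hu⟩ := hV.pow 3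
  rw [← hu]
  exact ⟨(V - 1) * ↑u⁻¹, by simp, fun U hU => (u.eq_mul_inv_iff_mul_eq).mpr hU⟩

end PowerSeries

/-- The vertex Green function `U₁₁`, defined by `U₁₁ C³ = x² (C - x)`, is a
well-defined (unique) formal power series, with `[x¹]U₁₁ = 1`, `[x²]U₁₁ = 1`,
`[x³]U₁₁ = 9`, `[x⁴]U₁₁ = 100`, `[x⁵]U₁₁ = 1323`. -/
theorem stmt_12 (C : PowerSeries ℚ)
    (h0 : constantCoeff C = 0) (h1 : coeff 1 C = 1)
    (hode : 2 * X * C * (d⁄dX ℚ C) = C * (1 + C) - X) :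
    (∃! U : PowerSeries ℚ, U * C ^ 3 = X ^ 2 * (C - X)) ∧
      ∀ U : PowerSeries ℚ, U * C ^ 3 = X ^ 2 * (C - X) →
        coeff 1 U = 1 ∧ coeff 2 U = 1 ∧ coeff 3 U = 9 ∧
          coeff 4 U = 100 ∧ coeff 5 U = 1323 := by
  refine ⟨existsUnique_mul_pow_three_eq h0 (by simp [h1]), fun U hU => ?_⟩
  obtain ⟨c2, c3, c4, c5, c6⟩ := coeff_two_to_six_of_ode h0 h1 hode
  obtain ⟨V, rfl⟩ : X ∣ C := X_dvd_iff.mpr h0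
  simp only [coeff_succ_X_mul] at h1 c2 c3 c4 c5 c6
  exact coeff_of_mul_pow_three_eq_sub_one h1 c2 c3 c4 c5 c6 (mul_X_mul_pow_three_eq_iff.mp hU)
end

section
/- Let D(x) = Σ_{n≥0}(2n−1)!! xⁿ and let C(x) be the unique formal power series with C(0)=0, [x¹]C=1 satisfying 2xCC' = C(1+C) − x. Then D(x) = 1 + C(x·D(x)²), where the right-hand side is composition of formal power series (x·D(x)² has zero constant term, so the composition is well defined). -/
open PowerSeries Nat

/-!
Put `t = x D(x)²`. Both `C(t)` and `D - 1` solve the equation `2 t F F' = F (1 + F) - t` of `C`,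
read in the variable `t`: the first by the chain rule, the second because the recurrence
`(2n+1)‼ = (2n+1) (2n-1)‼` amounts to `D = 1 + x D + 2 x² D'`. Two solutions `F₁, F₂` without
constant term agree: their difference `K` satisfies `t (S K)' = (1 + S) K t'` with
`S = F₁ + F₂`, and if `xᵐ ∣ K`, comparing the coefficients of `xᵐ` on both sides gives
`xᵐ⁺¹ ∣ K`.
-/

/-- Composition `f ∘ g` of formal power series, valid when `g` has zero
constant term: the `n`-th coefficient only depends on the first `n + 1`
partial sums `Σ_{k ≤ n} f_k gᵏ`. -/
noncomputable def psComp (f g : PowerSeries ℚ) : PowerSeries ℚ :=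
  PowerSeries.mk fun n =>
    coeff n (∑ k ∈ Finset.range (n + 1), PowerSeries.C (coeff k f) * g ^ k)

theorem psComp_eq_subst {f ψ : ℚ⟦X⟧} (hψ : constantCoeff ψ = 0) : psComp f ψ = f.subst ψ := by
  ext n
  rw [psComp, coeff_mk, map_sum, coeff_subst' (HasSubst.of_constantCoeff_zero' hψ),
    finsum_eq_sum_of_support_subset (s := Finset.range (n + 1))]
  · simp only [coeff_C_mul, smul_eq_mul]
  · intro d hd
    rw [Finset.coe_range, Set.mem_Iio]
    by_contra! hnd
    refine hd ?_
    show coeff d f • coeff n (ψ ^ d) = 0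
    rw [coeff_of_lt_order n ((Nat.cast_lt.mpr (Nat.lt_of_succ_le hnd)).trans_le
      (le_order_pow_of_constantCoeff_eq_zero d hψ)), smul_zero]

section ChordODE

variable {R : Type*} [CommRing R]

theorem X_mul_derivative_X_pow_mul (m : ℕ) (M : R⟦X⟧) :
    X * d⁄dX R (X ^ m * M) = X ^ m * (m • M + X * d⁄dX R M) := by
  cases m with
  | zero => simp
  | succ m =>
    simp only [Derivation.leibniz, Derivation.leibniz_pow, derivative_X, smul_eq_mul,
      nsmul_eq_mul, add_tsub_cancel_right, mul_one]
    ring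

theorem eq_zero_of_X_mul_derivative_mul_eq {u S K : R⟦X⟧} (hu : constantCoeff u = 1)
    (hS : constantCoeff S = 0)
    (h : X * u * d⁄dX R (S * K) = (1 + S) * K * d⁄dX R (X * u)) : K = 0 := by
  have hdvd : ∀ m, X ^ m ∣ K := by
    intro m
    induction m with
    | zero => simp
    | succ m ih =>
      obtain ⟨L, rfl⟩ := ih
      rw [mul_left_comm S] at h
      have hcancel : u * (m • (S * L) + X * d⁄dX R (S * L)) = (1 + S) * L * d⁄dX R (X * u) :=
        X_pow_mul_cancel (k := m) <| by
          linear_combination h - u * X_mul_derivative_X_pow_mul m (S * L)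
      -- constant terms: the left side vanishes as `S(0) = 0`, the right side is `L(0) u(0)`
      have hL : constantCoeff L = 0 := by
        simpa [hu, hS] using (congrArg constantCoeff hcancel).symm
      rw [pow_succ]
      exact mul_dvd_mul_left _ (X_dvd_iff.mpr hL)
  ext n
  simpa using X_pow_dvd_iff.mp (hdvd (n + 1)) n (Nat.lt_succ_self n)

/-- `F` solves `2 t F F' = F (1 + F) - t` in the variable `t = ψ`, with both sides
multiplied by `ψ'` so that the equation makes sense as an identity in `x`. -/
def ConnectedChordODE (ψ F : R⟦X⟧) : Prop :=
  2 * ψ * F * d⁄dX R F = (F * (1 + F) - ψ) * d⁄dX R ψ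

theorem ConnectedChordODE.subst {C ψ : R⟦X⟧} (hC : ConnectedChordODE X C)
    (hψ : constantCoeff ψ = 0) : ConnectedChordODE ψ (C.subst ψ) := by
  have ha := HasSubst.of_constantCoeff_zero' hψ
  have h := congrArg (substAlgHom (R := R) ha) hC
  simp only [map_mul, map_sub, map_add, map_one, map_ofNat, derivative_X, coe_substAlgHom,
    subst_X ha] at h
  unfold ConnectedChordODE
  rw [derivative_subst ha]
  linear_combination d⁄dX R ψ * h

theorem ConnectedChordODE.unique {u F₁ F₂ : R⟦X⟧} (hu : constantCoeff u = 1)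
    (h₁ : constantCoeff F₁ = 0) (h₂ : constantCoeff F₂ = 0)
    (hF₁ : ConnectedChordODE (X * u) F₁) (hF₂ : ConnectedChordODE (X * u) F₂) : F₁ = F₂ := by
  refine sub_eq_zero.mp (eq_zero_of_X_mul_derivative_mul_eq (S := F₁ + F₂) hu
    (by simp [h₁, h₂]) ?_)
  rw [Derivation.leibniz (D := d⁄dX R) (F₁ + F₂)]
  simp only [map_add, map_sub, smul_eq_mul]
  unfold ConnectedChordODE at hF₁ hF₂
  linear_combination hF₁ - hF₂

end ChordODE

section ChordDiagrams

variable (R : Type*) [CommRing R]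

-- at `n = 0` the truncated `2 * 0 - 1 = 0` gives `0‼ = 1 = (-1)‼`
noncomputable def chordDiagramSeries : R⟦X⟧ := mk fun n => ((2 * n - 1)‼ : R)

theorem chordDiagramSeries_eq :
    chordDiagramSeries R = 1 + X * chordDiagramSeries R
      + 2 * X ^ 2 * d⁄dX R (chordDiagramSeries R) := by
  rw [show (2 : R⟦X⟧) * X ^ 2 * d⁄dX R (chordDiagramSeries R)
    = X * (X * (d⁄dX R (chordDiagramSeries R) + d⁄dX R (chordDiagramSeries R))) by ring]
  ext n
  rcases n with _ | _ | n
  · simp [chordDiagramSeries]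
  · simp [chordDiagramSeries, coeff_one]
  · simp only [chordDiagramSeries, map_add, coeff_succ_X_mul, coeff_derivative, coeff_mk,
      coeff_one]
    rw [show 2 * (n + 2) - 1 = 2 * n + 1 + 2 by omega, show 2 * (n + 1) - 1 = 2 * n + 1 by omega,
      Nat.doubleFactorial_add_two]
    push_cast
    ring

theorem connectedChordODE_chordDiagramSeries_sub_one :
    ConnectedChordODE (X * chordDiagramSeries R ^ 2) (chordDiagramSeries R - 1) := by
  set D := chordDiagramSeries R
  unfold ConnectedChordODE
  simp only [Derivation.leibniz, Derivation.leibniz_pow, map_sub, derivative_X,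
    Derivation.map_one_eq_zero, smul_eq_mul]
  linear_combination (-(D ^ 3)) * chordDiagramSeries_eq R

end ChordDiagrams

theorem stmt_13_general (C : PowerSeries ℚ)
    (h0 : constantCoeff C = 0)
    (hode : 2 * X * C * (d⁄dX ℚ C) = C * (1 + C) - X) :
    let D : PowerSeries ℚ := PowerSeries.mk fun n => ((2 * n - 1)‼ : ℚ)
    D = 1 + psComp C (X * D ^ 2) := by
  show chordDiagramSeries ℚ = 1 + psComp C (X * chordDiagramSeries ℚ ^ 2)
  set D := chordDiagramSeries ℚ
  have hD0 : constantCoeff D = 1 := by simp [D, chordDiagramSeries]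
  have hψ : constantCoeff (X * D ^ 2) = 0 := by simp
  have hC : ConnectedChordODE X C := by rw [ConnectedChordODE, derivative_X, mul_one, hode]
  suffices C.subst (X * D ^ 2) = D - 1 by rw [psComp_eq_subst hψ, this]; ring
  exact ConnectedChordODE.unique (by simp [hD0]) (constantCoeff_subst_eq_zero hψ C h0)
    (by simp [hD0]) (hC.subst hψ) (connectedChordODE_chordDiagramSeries_sub_one ℚ)

/-- `D(x) = 1 + C(x D(x)²)`: the root-component decomposition of chord
diagrams, where `D` counts all rooted chord diagrams and `C` the connected
ones. -/
theorem stmt_13 (C : PowerSeries ℚ)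
    (h0 : constantCoeff C = 0) (h1 : coeff 1 C = 1)
    (hode : 2 * X * C * (d⁄dX ℚ C) = C * (1 + C) - X) :
    let D : PowerSeries ℚ := PowerSeries.mk fun n => ((2 * n - 1)‼ : ℚ)
    D = 1 + psComp C (X * D ^ 2) :=
  stmt_13_general C h0 hode
end
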